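/- arXiv:2605.22554 — 5 statements merged into one kernel-verified Lean document; each statement's English description precedes it below -/
import Mathlib

section
/- Let A be an n×n matrix over F₂ such that every principal minor of A (including det A) equals 1. Then there is a permutation σ of {1,...,n} such that the matrix B with B_{ij} = A_{σ(i)σ(j)} is upper triangular with all diagonal entries equal to 1. -/
abbrev PMH {N : ℕ} (A : Matrix (Fin N) (Fin N) (ZMod 2)) : Prop :=
  ∀ S : Finset (Fin N),
      (A.submatrix (fun i : {x // x ∈ S} => (i : Fin N))
        (fun j : {x // x ∈ S} => (j : Fin N))).det = 1

lemma diag_one {N : ℕ} (A : Matrix (Fin N) (Fin N) (ZMod 2)) (h : PMH A) (i : Fin N) :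
    A i i = 1 := by
  have hs := h {i}
  haveI : Unique {x // x ∈ ({i} : Finset (Fin N))} :=
    ⟨⟨⟨i, Finset.mem_singleton_self i⟩⟩, by
      rintro ⟨x, hx⟩
      simp only [Finset.mem_singleton] at hx
      subst hx; rfl⟩
  rw [Matrix.det_unique] at hs
  have hd : ((default : {x // x ∈ ({i} : Finset (Fin N))}) : Fin N) = i :=
    Finset.mem_singleton.mp (default : {x // x ∈ ({i} : Finset (Fin N))}).2
  simpa [Matrix.submatrix_apply, hd] using hs

/-- A directed cycle of length `k` in the "off-diagonal ones" digraph of `A`. -/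
def Cyc {N : ℕ} (A : Matrix (Fin N) (Fin N) (ZMod 2)) (k : ℕ) : Prop :=
  2 ≤ k ∧ ∃ w : Fin k → Fin N, Function.Injective w ∧
    ∀ i j : Fin k, (j : ℕ) = ((i : ℕ) + 1) % k → A (w i) (w j) = 1

lemma fin_add_one_val {k : ℕ} [NeZero k] (hk : 2 ≤ k) (i : Fin k) :
    ((i + 1 : Fin k) : ℕ) = ((i : ℕ) + 1) % k := by
  rw [Fin.val_add, Fin.val_one', Nat.mod_eq_of_lt hk]

lemma fin_ne_add_one {k : ℕ} [NeZero k] (hk : 2 ≤ k) (a : Fin k) : a ≠ a + 1 := by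
  intro hcon
  have h1 := fin_add_one_val hk a
  rw [← hcon] at h1
  have h2 := a.isLt
  rcases Nat.lt_or_ge ((a : ℕ) + 1) k with hlt | hge
  · rw [Nat.mod_eq_of_lt hlt] at h1; omega
  · have : (a : ℕ) = k - 1 := by omega
    rw [this, show k - 1 + 1 = k by omega, Nat.mod_self] at h1
    omega

lemma sink_exists {N : ℕ} (hN : 0 < N) (A : Matrix (Fin N) (Fin N) (ZMod 2)) (h : PMH A) :
    ∃ m : Fin N, ∀ t : Fin N, t ≠ m → A m t = 0 := by
  classical
  by_contra hc
  push_neg at hc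
  choose f hf1 hf2 using hc
  have hzo : ∀ x : ZMod 2, x ≠ 0 → x = 1 := by decide
  have hf2' : ∀ m, A m (f m) = 1 := fun m => hzo _ (hf2 m)
  -- find a periodic point of f
  obtain ⟨a, -, b, -, hab, heq⟩ :=
    Finset.exists_ne_map_eq_of_card_lt_of_maps_to
      (s := Finset.range (N + 1)) (t := (Finset.univ : Finset (Fin N)))
      (by simp) (fun j _ => Finset.mem_univ (f^[j] (⟨0, hN⟩ : Fin N)))
  wlog hab' : a < b generalizing a b
  · exact this b a hab.symm heq.symm (by omega)
  set x : Fin N := f^[a] ⟨0, hN⟩ with hx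
  have hper : ∃ p, 0 < p ∧ f^[p] x = x := by
    refine ⟨b - a, by omega, ?_⟩
    rw [hx, ← Function.iterate_add_apply, show b - a + a = b by omega]
    exact heq.symm
  obtain ⟨p, hp_pos, hp_eq, hp_min⟩ :
      ∃ p, 0 < p ∧ f^[p] x = x ∧ ∀ q, 0 < q → f^[q] x = x → p ≤ q :=
    ⟨Nat.find hper, (Nat.find_spec hper).1, (Nat.find_spec hper).2,
      fun q h1 h2 => Nat.find_le ⟨h1, h2⟩⟩
  have hp2 : 2 ≤ p := by
    rcases Nat.lt_or_ge p 2 with hlt | hge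
    · have hp1 : p = 1 := by omega
      rw [hp1, Function.iterate_one] at hp_eq
      exact absurd hp_eq (hf1 x)
    · exact hge
  haveI : NeZero p := ⟨by omega⟩
  set v : Fin p → Fin N := fun j => f^[j.val] x with hv
  have hvlt : ∀ i j : Fin p, i.val < j.val → v i ≠ v j := by
    intro i j hij hvij
    have h1 : f^[p - j.val + i.val] x = x := by
      rw [Function.iterate_add_apply]
      show f^[p - j.val] (v i) = x
      rw [hvij]
      show f^[p - j.val] (f^[j.val] x) = x
      rw [← Function.iterate_add_apply, show p - j.val + j.val = p by omega]
      exact hp_eq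
    have h2 := j.isLt
    have := hp_min _ (by omega) h1
    omega
  have hvinj : Function.Injective v := by
    intro i j hij
    rcases lt_trichotomy i.val j.val with hl | he | hg
    · exact absurd hij (hvlt i j hl)
    · exact Fin.ext he
    · exact absurd hij.symm (hvlt j i hg)
  have hvedge : ∀ i j : Fin p, (j : ℕ) = ((i : ℕ) + 1) % p → v j = f (v i) := by
    intro i j hj
    rcases Nat.lt_or_ge (i.val + 1) p with hlt | hge
    · rw [Nat.mod_eq_of_lt hlt] at hj
      show f^[j.val] x = f (f^[i.val] x)
      rw [hj, Function.iterate_succ_apply']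
    · have hip : i.val = p - 1 := by have := i.isLt; omega
      have h0 : (j : ℕ) = 0 := by
        rw [hj, hip, show p - 1 + 1 = p by omega, Nat.mod_self]
      show f^[j.val] x = f (f^[i.val] x)
      rw [h0, hip]
      calc f^[0] x = x := rfl
        _ = f^[p] x := hp_eq.symm
        _ = f^[p - 1 + 1] x := by rw [show p - 1 + 1 = p by omega]
        _ = f (f^[p - 1] x) := Function.iterate_succ_apply' f (p - 1) x
  have hcyc : ∃ k, Cyc A k :=
    ⟨p, hp2, v, hvinj, fun i j hj => by rw [hvedge i j hj]; exact hf2' (v i)⟩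
  obtain ⟨k, ⟨hk2, w, hwinj, hwedge⟩, hk_min⟩ :
      ∃ k, Cyc A k ∧ ∀ l, l < k → ¬ Cyc A l :=
    ⟨Nat.find hcyc, Nat.find_spec hcyc, fun l hl => Nat.find_min hcyc hl⟩
  haveI : NeZero k := ⟨by omega⟩
  have hwedge' : ∀ i : Fin k, A (w i) (w (i + 1)) = 1 :=
    fun i => hwedge i (i + 1) (fin_add_one_val hk2 i)
  -- chordless: the only 1-entries in the principal submatrix on the cycle
  -- are the diagonal and the cycle edges
  have hchord : ∀ a b : Fin k, b ≠ a → b ≠ a + 1 → A (w a) (w b) = 0 := by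
    intro a b hba hba1
    by_contra hne0
    have honeab : A (w a) (w b) = 1 := hzo _ hne0
    set d : ℕ := ((a - b : Fin k) : ℕ) with hddef
    have hd1 : 1 ≤ d := by
      have : (a - b : Fin k) ≠ 0 := sub_ne_zero.mpr hba.symm
      have : d ≠ 0 := fun h0 => this (Fin.val_injective (h0.trans (rfl : (0:ℕ) = ((0 : Fin k) : ℕ))))
      omega
    have hdk : d < k := (a - b : Fin k).isLt
    have hd2 : d ≤ k - 2 := by
      rcases Nat.lt_or_ge d (k - 1) with hlt | hge
      · omega
      · exfalso
        apply hba1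
        have hd' : d = k - 1 := by omega
        have hab1 : (a - b : Fin k) = -1 := by
          apply Fin.val_injective
          rw [show ((-1 : Fin k) : ℕ) = k - 1 from ?_]
          · exact hd'
          · rcases k with _ | k'
            · exact absurd rfl (NeZero.ne 0)
            · exact Fin.coe_neg_one
        have := sub_eq_iff_eq_add'.mp hab1
        rw [this, add_assoc, neg_add_cancel, add_zero]
    have hlk : d + 1 < k := by omega
    apply hk_min (d + 1) hlk
    refine ⟨by omega, fun i => w (b + Fin.castLE hlk.le i), ?_, ?_⟩
    · intro i j hij
      have := hwinj hij
      exact Fin.castLE_injective _ (add_left_cancel this)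
    · intro i j hj
      rcases Nat.lt_or_ge (i.val + 1) (d + 1) with hlt | hge
      · rw [Nat.mod_eq_of_lt hlt] at hj
        have hstep : b + Fin.castLE hlk.le j = (b + Fin.castLE hlk.le i) + 1 := by
          rw [add_assoc]
          congr 1
          apply Fin.val_injective
          rw [Fin.coe_castLE, fin_add_one_val hk2, Fin.coe_castLE,
            Nat.mod_eq_of_lt (by omega), hj]
        show A (w (b + Fin.castLE hlk.le i)) (w (b + Fin.castLE hlk.le j)) = 1
        rw [hstep]
        exact hwedge' _
      · have hival : i.val = d := by have := i.isLt; omega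
        have hjval : (j : ℕ) = 0 := by
          rw [hj, hival, Nat.mod_self]
        have hj0 : b + Fin.castLE hlk.le j = b := by
          have : Fin.castLE hlk.le j = 0 := by
            apply Fin.val_injective
            rw [Fin.coe_castLE, hjval]
            rfl
          rw [this, add_zero]
        have hia : b + Fin.castLE hlk.le i = a := by
          have : Fin.castLE hlk.le i = a - b := by
            apply Fin.val_injective
            rw [Fin.coe_castLE, hival]
          rw [this, add_comm, sub_add_cancel]
        show A (w (b + Fin.castLE hlk.le i)) (w (b + Fin.castLE hlk.le j)) = 1
        rw [hj0, hia]
        exact honeab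
  -- determinant contradiction on the cycle support
  set S : Finset (Fin N) := Finset.image w Finset.univ with hS
  have hdet := h S
  have hmem : ∀ i : Fin k, w i ∈ S := fun i => Finset.mem_image_of_mem w (Finset.mem_univ i)
  set e : Fin k → {x // x ∈ S} := fun i => ⟨w i, hmem i⟩ with he
  have hebij : Function.Bijective e := by
    constructor
    · intro i j hij
      exact hwinj (congrArg Subtype.val hij)
    · rintro ⟨t, ht⟩
      obtain ⟨i, -, rfl⟩ := Finset.mem_image.mp ht
      exact ⟨i, rfl⟩
  set M := A.submatrix (fun i : {x // x ∈ S} => (i : Fin N))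
      (fun j : {x // x ∈ S} => (j : Fin N)) with hM
  have hrow : ∀ a : Fin k, ∑ t : {x // x ∈ S}, M (e a) t = 0 := by
    intro a
    rw [← Function.Bijective.sum_comp hebij (fun t => M (e a) t)]
    have h1 : ∑ i : Fin k, M (e a) (e i) = ∑ i : Fin k, A (w a) (w i) := rfl
    rw [h1]
    have h2 : ∑ i : Fin k, A (w a) (w i)
        = ∑ i ∈ ({a, a + 1} : Finset (Fin k)), A (w a) (w i) := by
      refine (Finset.sum_subset (Finset.subset_univ _) (fun i _ hi => ?_)).symm
      simp only [Finset.mem_insert, Finset.mem_singleton] at hi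
      push_neg at hi
      exact hchord a i hi.1 hi.2
    rw [h2, Finset.sum_pair (fin_ne_add_one hk2 a), diag_one A h, hwedge' a]
    decide
  have hunit : IsUnit M.det := by rw [hdet]; exact isUnit_one
  have hv1 : M.mulVec (fun _ => 1) = 0 := by
    funext s
    obtain ⟨a, rfl⟩ := hebij.2 s
    simpa [Matrix.mulVec, dotProduct] using hrow a
  have hfinal : (fun _ : {x // x ∈ S} => (1 : ZMod 2)) = 0 := by
    have hcalc := congrArg (fun vv => M⁻¹.mulVec vv) hv1
    simpa [Matrix.mulVec_mulVec, Matrix.nonsing_inv_mul M hunit,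
      Matrix.one_mulVec, Matrix.mulVec_zero] using hcalc
  exact one_ne_zero (congrFun hfinal (e 0))

/-- Masuda–Panov, Lemma 3.3. If every principal minor of a
square matrix `A` over `F₂` equals `1`, then after a simultaneous permutation
of rows and columns `A` becomes upper triangular with unit diagonal. -/
theorem stmt5 (n : ℕ) (A : Matrix (Fin n) (Fin n) (ZMod 2))
    (h : ∀ S : Finset (Fin n),
      (A.submatrix (fun i : {x // x ∈ S} => (i : Fin n))
        (fun j : {x // x ∈ S} => (j : Fin n))).det = 1) :
    ∃ σ : Equiv.Perm (Fin n),
      (∀ i j : Fin n, j < i → A (σ i) (σ j) = 0) ∧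
      (∀ i : Fin n, A (σ i) (σ i) = 1) := by
  induction n with
  | zero => exact ⟨Equiv.refl _, fun i => i.elim0, fun i => i.elim0⟩
  | succ n ih =>
    obtain ⟨m, hm⟩ := sink_exists (Nat.succ_pos n) A h
    set A' := A.submatrix m.succAbove m.succAbove with hA'
    have h' : PMH A' := by
      intro S'
      set S : Finset (Fin (n + 1)) :=
        S'.map ⟨m.succAbove, Fin.succAbove_right_injective⟩ with hS
      set e : {x // x ∈ S'} → {x // x ∈ S} :=
        fun x => ⟨m.succAbove x.1, Finset.mem_map_of_mem _ x.2⟩ with he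
      have hbij : Function.Bijective e := by
        constructor
        · intro x y hxy
          exact Subtype.ext
            (Fin.succAbove_right_injective (congrArg Subtype.val hxy))
        · rintro ⟨t, ht⟩
          obtain ⟨u, hu, rfl⟩ := Finset.mem_map.mp ht
          exact ⟨⟨u, hu⟩, rfl⟩
      have key : (A'.submatrix (fun i : {x // x ∈ S'} => (i : Fin n))
            (fun j : {x // x ∈ S'} => (j : Fin n)))
          = ((A.submatrix (fun i : {x // x ∈ S} => (i : Fin (n + 1)))
            (fun j : {x // x ∈ S} => (j : Fin (n + 1)))).submatrix
              (Equiv.ofBijective e hbij) (Equiv.ofBijective e hbij)) := rfl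
      rw [key, Matrix.det_submatrix_equiv_self]
      exact h S
    obtain ⟨σ', hσ'1, hσ'2⟩ := ih A' h'
    set σ : Equiv.Perm (Fin (n + 1)) :=
      (finSuccEquiv' (Fin.last n)).trans
        (σ'.optionCongr.trans (finSuccEquiv' m).symm) with hσ
    have hlast : σ (Fin.last n) = m := by
      simp [hσ, finSuccEquiv'_at, finSuccEquiv'_symm_none]
    have hcast : ∀ i : Fin n, σ (Fin.castSucc i) = m.succAbove (σ' i) := by
      intro i
      have h1 : finSuccEquiv' (Fin.last n) (Fin.castSucc i) = some i := by
        rw [← Fin.succAbove_last, finSuccEquiv'_succAbove]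
      simp [hσ, h1, finSuccEquiv'_symm_some]
    refine ⟨σ, ?_, ?_⟩
    · intro i j hji
      rcases Fin.eq_castSucc_or_eq_last i with ⟨i', rfl⟩ | rfl
      · have hjne : j ≠ Fin.last n := by
          intro hj
          rw [hj] at hji
          exact absurd (hji.trans (Fin.castSucc_lt_last i')) (lt_irrefl _)
        rcases Fin.eq_castSucc_or_eq_last j with ⟨j', rfl⟩ | rfl
        · rw [hcast, hcast]
          exact hσ'1 i' j' (Fin.castSucc_lt_castSucc_iff.mp hji)
        · exact absurd rfl hjne
      · have hjne : j ≠ Fin.last n := hji.ne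
        rcases Fin.eq_castSucc_or_eq_last j with ⟨j', rfl⟩ | rfl
        · rw [hlast, hcast]
          exact hm _ (Fin.succAbove_ne m (σ' j'))
        · exact absurd rfl hjne
    · intro i
      rcases Fin.eq_castSucc_or_eq_last i with ⟨i', rfl⟩ | rfl
      · rw [hcast]
        exact hσ'2 i'
      · rw [hlast]
        exact diag_one A h m
end

section
/- Let E be an n-dimensional vector space over F₂ and let D₁,...,Dₙ ⊆ E* \ {0} be nonempty subsets of nonzero linear functionals such that every transversal (d₁,...,dₙ) with dᵢ ∈ Dᵢ is a basis of E*. Then, after permuting the indices of the Dᵢ, there exists a basis ε₁,...,εₙ of E* such that Dᵢ ⊆ εᵢ + span(ε_{i+1},...,εₙ) for every i = 1,...,n (where the span is {0} when i = n). -/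
open Module

section Help
variable {V : Type*} [AddCommGroup V] [Module (ZMod 2) V]

lemma zmod2_eq_one_of_ne_zero : ∀ c : ZMod 2, c ≠ 0 → c = 1 := by decide
lemma zmod2_eq_one_of_isUnit : ∀ c : ZMod 2, IsUnit c → c = 1 := by decide
lemma zmod2_add_self : ∀ c : ZMod 2, c + c = 0 := by decide

lemma char2_sub (a b : V) : a - b = a + b := by
  have h : b + b = 0 := by
    have := two_smul (ZMod 2) b
    rw [show (2 : ZMod 2) = 0 by decide, zero_smul] at this
    exact this.symm
  rw [sub_eq_add_neg, neg_eq_of_add_eq_zero_left h]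
lemma core {N L : ℕ} (hL : 1 ≤ L) [FiniteDimensional (ZMod 2) V]
    (hdim : finrank (ZMod 2) V = N)
    (D : Fin N → Set V) (B : Basis (Fin N) (ZMod 2) V) (hBD : ∀ j, B j ∈ D j)
    (hdet1 : ∀ z : Fin N → V, (∀ j, z j ∈ D j) → B.det z = 1)
    (e : Fin L → Fin N) (he : Function.Injective e)
    (nxt : Fin L → Fin L) (hnxt : Function.Injective nxt)
    (x y : Fin L → V) (hx : ∀ t, x t ∈ D (e t)) (hy : ∀ t, y t ∈ D (e t))
    (hcoord : ∀ s t : Fin L, B.repr (x t - y t) (e s) = if s = nxt t then 1 else 0) :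
    False := by
  classical
  -- every `extend`-family built from a transversal is a transversal
  have hext : ∀ u : Fin L → V, (∀ t, u t ∈ D (e t)) →
      ∀ j, Function.extend e u (⇑B) j ∈ D j := by
    intro u hu j
    by_cases hj : ∃ t, e t = j
    · obtain ⟨t, rfl⟩ := hj
      rw [he.extend_apply]
      exact hu t
    · rw [Function.extend_apply' _ _ _ hj]
      exact hBD j
  -- determinant of a partially "doubled" family
  have key : ∀ T : Finset (Fin L), ∀ x' : Fin L → V, (∀ t, x' t ∈ D (e t)) →
      B.det (Function.extend e (fun t => if t ∈ T then x' t + y t else x' t) (⇑B))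
        = if T = ∅ then 1 else 0 := by
    intro T
    induction T using Finset.induction_on with
    | empty =>
      intro x' hx'
      rw [if_pos rfl]
      have : (fun t => if t ∈ (∅ : Finset (Fin L)) then x' t + y t else x' t) = x' := by
        funext t; simp
      rw [this]
      exact hdet1 _ (hext x' hx')
    | @insert a T' ha IH =>
      intro x' hx'
      set base := Function.extend e (fun t => if t ∈ T' then x' t + y t else x' t) (⇑B) with hbase_def
      have hbase : base (e a) = x' a := by
        rw [hbase_def, he.extend_apply]; simp [ha]
      have h1 : Function.extend e (fun t => if t ∈ insert a T' then x' t + y t else x' t) (⇑B)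
          = Function.update base (e a) (x' a + y a) := by
        funext j
        by_cases hj : ∃ t, e t = j
        · obtain ⟨t, rfl⟩ := hj
          rw [he.extend_apply]
          by_cases hta : t = a
          · subst hta
            rw [Function.update_self]
            simp
          · rw [Function.update_of_ne (fun h => hta (he h)), hbase_def, he.extend_apply]
            simp [Finset.mem_insert, hta]
        · rw [Function.extend_apply' _ _ _ hj,
            Function.update_of_ne (by rintro rfl; exact hj ⟨a, rfl⟩),
            hbase_def, Function.extend_apply' _ _ _ hj]
      have h2 : Function.update base (e a) (x' a) = base := by
        rw [← hbase]; exact Function.update_eq_self _ _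
      have h3 : Function.update base (e a) (y a)
          = Function.extend e (fun t => if t ∈ T' then Function.update x' a (y a) t + y t
              else Function.update x' a (y a) t) (⇑B) := by
        funext j
        by_cases hj : ∃ t, e t = j
        · obtain ⟨t, rfl⟩ := hj
          rw [he.extend_apply]
          by_cases hta : t = a
          · subst hta
            rw [Function.update_self]
            simp [ha]
          · rw [Function.update_of_ne (fun h => hta (he h)), hbase_def, he.extend_apply]
            simp [Function.update_of_ne hta]
        · rw [Function.extend_apply' _ _ _ hj,
            Function.update_of_ne (by rintro rfl; exact hj ⟨a, rfl⟩), hbase_def,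
            Function.extend_apply' _ _ _ hj]
      rw [h1, AlternatingMap.map_update_add, h2, h3, IH x' hx',
        IH (Function.update x' a (y a)) (by
          intro t
          by_cases hta : t = a
          · subst hta; rw [Function.update_self]; exact hy t
          · rw [Function.update_of_ne hta]; exact hx' t)]
      rw [if_neg (Finset.insert_ne_empty a T')]
      by_cases hT' : T' = ∅ <;> simp [hT'] <;> decide
  -- so the family with all rows doubled has det 0
  have hzero : B.det (Function.extend e (fun t => x t + y t) (⇑B)) = 0 := by
    have h := key Finset.univ x hx
    rw [if_neg (Finset.univ_nonempty_iff.mpr ⟨⟨0, hL⟩⟩).ne_empty] at h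
    simpa using h
  set g := Function.extend e (fun t => x t + y t) (⇑B) with hg_def
  have hg1 : ∀ t, g (e t) = x t - y t := by
    intro t; rw [hg_def, he.extend_apply, char2_sub]
  have hg2 : ∀ j, (¬∃ t, e t = j) → g j = B j := fun j hj =>
    Function.extend_apply' _ _ _ hj
  -- but it is linearly independent
  have hli : LinearIndependent (ZMod 2) g := by
    rw [Fintype.linearIndependent_iff]
    intro gc hgc
    have hcomp : ∀ k : Fin N, (∑ j, gc j * B.repr (g j) k) = 0 := by
      intro k
      have : B.repr (∑ j, gc j • g j) k = 0 := by rw [hgc]; simp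
      rw [map_sum] at this
      simpa using this
    have hrange : ∀ t : Fin L, gc (e t) = 0 := by
      intro t
      have h := hcomp (e (nxt t))
      rw [Finset.sum_eq_single (e t)] at h
      · rw [hg1 t, hcoord (nxt t) t, if_pos rfl, mul_one] at h
        exact h
      · intro j _ hj
        by_cases hjr : ∃ t', e t' = j
        · obtain ⟨t', rfl⟩ := hjr
          rw [hg1 t', hcoord (nxt t) t', if_neg (fun hh : nxt t = nxt t' => hj (by
              rw [hnxt hh])), mul_zero]
        · rw [hg2 j hjr, B.repr_self, Finsupp.single_apply,
            if_neg (fun hh => hjr ⟨nxt t, hh.symm⟩), mul_zero]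
      · intro h; exact absurd (Finset.mem_univ _) h
    intro j
    by_cases hj : ∃ t, e t = j
    · obtain ⟨t, rfl⟩ := hj; exact hrange t
    · have h := hcomp j
      rw [Finset.sum_eq_single j] at h
      · rw [hg2 j hj, B.repr_self, Finsupp.single_apply, if_pos rfl, mul_one] at h
        exact h
      · intro j' _ hj'
        by_cases hjr : ∃ t', e t' = j'
        · obtain ⟨t', rfl⟩ := hjr
          rw [hrange t', zero_mul]
        · rw [hg2 j' hjr, B.repr_self, Finsupp.single_apply, if_neg hj', mul_zero]
      · intro h; exact absurd (Finset.mem_univ _) h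
    -- contradiction: independent family of full size has unit determinant
  have hN : Nonempty (Fin N) := ⟨e ⟨0, hL⟩⟩
  have hcard : Fintype.card (Fin N) = finrank (ZMod 2) V := by simp [hdim]
  have hBg := basisOfLinearIndependentOfCardEqFinrank hli hcard
  have hunit : IsUnit (B.det ⇑(basisOfLinearIndependentOfCardEqFinrank hli hcard)) :=
    B.isUnit_det _
  rw [coe_basisOfLinearIndependentOfCardEqFinrank] at hunit
  exact hunit.ne_zero hzero

end Help

lemma exists_min_cycle {n : ℕ} (R : Fin n → Fin n → Prop) (i0 : Fin n)
    (hirr : ∀ i, ¬ R i i) (hno : ∀ i, ∃ j, R j i) :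
    ∃ (L : ℕ) (c : ℕ → Fin n), 2 ≤ L ∧ c 0 = c L ∧ (∀ t < L, R (c t) (c (t+1))) ∧
      (∀ a b, a < L → b < L → c a = c b → a = b) ∧
      (∀ s r, s < L → r < L → R (c s) (c r) → r = (s+1) % L) := by
  classical
  choose f hf using hno
  -- find a closed walk
  have hex : ∃ L, 1 ≤ L ∧ ∃ c : ℕ → Fin n, c 0 = c L ∧ ∀ t < L, R (c t) (c (t+1)) := by
    obtain ⟨a, b, hab, hFab⟩ := Fintype.exists_ne_map_eq_of_card_lt
      (fun t : Fin (n+1) => f^[t.val] i0) (by simp)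
    rcases hab.lt_or_gt with h | h
    · refine ⟨b.val - a.val, by omega, fun t => f^[b.val - t] i0, ?_, ?_⟩
      · show f^[b.val - 0] i0 = f^[b.val - (b.val - a.val)] i0
        rw [Nat.sub_zero, show b.val - (b.val - a.val) = a.val by omega]
        exact hFab.symm
      · intro t ht
        show R (f^[b.val - t] i0) (f^[b.val - (t+1)] i0)
        rw [show b.val - t = (b.val - (t+1)) + 1 by omega, Function.iterate_succ_apply']
        exact hf _
    · refine ⟨a.val - b.val, by omega, fun t => f^[a.val - t] i0, ?_, ?_⟩
      · show f^[a.val - 0] i0 = f^[a.val - (a.val - b.val)] i0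
        rw [Nat.sub_zero, show a.val - (a.val - b.val) = b.val by omega]
        exact hFab
      · intro t ht
        show R (f^[a.val - t] i0) (f^[a.val - (t+1)] i0)
        rw [show a.val - t = (a.val - (t+1)) + 1 by omega, Function.iterate_succ_apply']
        exact hf _
  obtain ⟨hL1, c, hc0, hcR⟩ := Nat.find_spec hex
  have hmin : ∀ L' < Nat.find hex, ¬(1 ≤ L' ∧ ∃ c' : ℕ → Fin n, c' 0 = c' L' ∧
      ∀ t < L', R (c' t) (c' (t+1))) := fun L' h => Nat.find_min hex h
  set L := Nat.find hex with hL_def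
  clear_value L
  clear hL_def hex
  have hL2 : 2 ≤ L := by
    by_contra h
    have hL1' : L = 1 := by omega
    have hR := hcR 0 (by omega)
    rw [hL1'] at hc0
    rw [← hc0] at hR
    exact hirr _ hR
  have hinj : ∀ a b, a < L → b < L → c a = c b → a = b := by
    have main : ∀ a b, a < b → b < L → c a = c b → False := by
      intro a b h hb hab
      apply hmin (b - a) (by omega)
      refine ⟨by omega, fun t => c (a + t), ?_, fun t ht => hcR (a+t) (by omega)⟩
      show c (a + 0) = c (a + (b - a))
      rw [Nat.add_zero, show a + (b - a) = b by omega]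
      exact hab
    intro a b ha hb hab
    rcases Nat.lt_trichotomy a b with h | h | h
    · exact absurd (main a b h hb hab) not_false
    · exact h
    · exact absurd (main b a h ha hab.symm) not_false
  have hchord : ∀ s r, s < L → r < L → R (c s) (c r) → r = (s+1) % L := by
    intro s r hs hr hRsr
    by_contra hne
    rcases le_or_gt r s with hrs | hsr
    · -- r ≤ s : new walk  r → r+1 → ... → s → (chord) r
      have hlen : s - r + 1 < L := by
        rcases Nat.lt_or_ge (s - r + 1) L with h | h
        · exact h
        · exfalso
          have hr0 : r = 0 := by omega
          have hsL : s = L - 1 := by omega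
          apply hne
          rw [hr0, hsL, show L - 1 + 1 = L by omega, Nat.mod_self]
      apply hmin (s - r + 1) hlen
      refine ⟨by omega, fun t => if t ≤ s - r then c (r + t) else c r, ?_, ?_⟩
      · dsimp only
        rw [if_pos (Nat.zero_le _), if_neg (show ¬(s - r + 1 ≤ s - r) by omega), Nat.add_zero]
      · intro t ht
        dsimp only
        by_cases h1 : t + 1 ≤ s - r
        · rw [if_pos (show t ≤ s - r by omega), if_pos h1, show r + (t+1) = (r+t)+1 by omega]
          exact hcR (r+t) (by omega)
        · have ht' : t = s - r := by omega
          rw [if_pos (show t ≤ s - r by omega), if_neg (show ¬(t + 1 ≤ s - r) by omega), ht',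
            show r + (s - r) = s by omega]
          exact hRsr
    · -- s < r : new walk  r → ... → L(=0) → ... → s → (chord) r
      have hs1 : s + 1 < L := by omega
      have hr2 : s + 2 ≤ r := by
        rcases Nat.lt_or_ge r (s+2) with h | h
        · exfalso
          apply hne
          rw [show r = s + 1 by omega, Nat.mod_eq_of_lt hs1]
        · exact h
      have hKL : (L - r + s) + 1 < L := by omega
      apply hmin ((L - r + s)+1) hKL
      refine ⟨by omega, fun t => if t ≤ (L - r + s) then (if r + t ≤ L then c (r+t) else c (r + t - L))
        else c r, ?_, ?_⟩
      · dsimp only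
        rw [if_pos (Nat.zero_le _), if_pos (by omega), if_neg (by omega), Nat.add_zero]
      · intro t ht
        dsimp only
        have htK : t ≤ (L - r + s) := by omega
        rw [if_pos htK]
        by_cases hlast : t = (L - r + s)
        · subst hlast
          rw [if_neg (show ¬((L - r + s) + 1 ≤ L - r + s) by omega)]
          by_cases hs0 : s = 0
          · subst hs0
            rw [if_pos (show r + (L - r + 0) ≤ L by omega),
              show r + (L - r + 0) = L by omega, ← hc0]
            exact hRsr
          · rw [if_neg (show ¬(r + (L - r + s) ≤ L) by omega),
              show r + (L - r + s) - L = s by omega]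
            exact hRsr
        · have ht1 : t + 1 ≤ (L - r + s) := by omega
          rw [if_pos ht1]
          by_cases h2 : r + t = L
          · rw [if_pos (show r + t ≤ L by omega), h2, ← hc0,
              if_neg (show ¬(r + (t+1) ≤ L) by omega),
              show r + (t+1) - L = 1 by omega]
            exact hcR 0 (by omega)
          · rcases Nat.lt_or_ge (r + t) L with h1 | h1
            · rw [if_pos (show r + t ≤ L by omega), if_pos (show r + (t+1) ≤ L by omega),
                show r + (t+1) = (r+t)+1 by omega]
              exact hcR (r+t) h1
            · rw [if_neg (show ¬(r + t ≤ L) by omega), if_neg (show ¬(r + (t+1) ≤ L) by omega),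
                show r + (t+1) - L = (r + t - L) + 1 by omega]
              exact hcR (r + t - L) (by omega)
  exact ⟨L, c, hL2, hc0, hcR, hinj, hchord⟩


theorem main : ∀ (n : ℕ) (V : Type u) [AddCommGroup V] [Module (ZMod 2) V]
    [FiniteDimensional (ZMod 2) V], finrank (ZMod 2) V = n →
    ∀ (D : Fin n → Set V), (∀ i, (D i).Nonempty) →
    (∀ d : Fin n → V, (∀ i, d i ∈ D i) → LinearIndependent (ZMod 2) d) →
    ∃ (π : Equiv.Perm (Fin n)) (ε : Basis (Fin n) (ZMod 2) V),
      ∀ i : Fin n, ∀ x ∈ D (π i),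
        x - ε i ∈ Submodule.span (ZMod 2) (ε '' {j : Fin n | i < j}) := by
  intro n
  induction n with
  | zero =>
    intro V _ _ _ hdim D hne htrans
    haveI : Subsingleton V := finrank_zero_iff.mp hdim
    exact ⟨Equiv.refl _, Basis.empty V, fun i => i.elim0⟩
  | succ m IH =>
    intro V _ _ _ hdim D hne htrans
    classical
    -- fixed transversal and the corresponding basis
    set d : Fin (m+1) → V := fun i => (hne i).choose with hd_def
    have hd : ∀ i, d i ∈ D i := fun i => (hne i).choose_spec
    have hcard : Fintype.card (Fin (m+1)) = finrank (ZMod 2) V := by simp [hdim]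
    set B := basisOfLinearIndependentOfCardEqFinrank (htrans d hd) hcard with hB_def
    have hBd : ⇑B = d := coe_basisOfLinearIndependentOfCardEqFinrank _ _
    have hBD : ∀ j, B j ∈ D j := fun j => by rw [congrFun hBd j]; exact hd j
    -- every transversal gives determinant 1
    have hdet1 : ∀ z : Fin (m+1) → V, (∀ j, z j ∈ D j) → B.det z = 1 := by
      intro z hz
      have hzB := basisOfLinearIndependentOfCardEqFinrank (htrans z hz) hcard
      have h1 : IsUnit (B.det ⇑(basisOfLinearIndependentOfCardEqFinrank (htrans z hz) hcard)) :=
        B.isUnit_det _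
      rw [coe_basisOfLinearIndependentOfCardEqFinrank] at h1
      exact zmod2_eq_one_of_isUnit _ h1
    -- every element of `D i` has `i`-th coordinate 1
    have key1 : ∀ i, ∀ x ∈ D i, B.repr x i = 1 := by
      intro i x hx
      by_contra hne1
      have h0 : B.repr x i = 0 := by
        rcases ZMod.val_cast_of_lt (show 1 < 2 by norm_num) with _
        revert hne1
        generalize B.repr x i = cc
        revert cc
        decide
      set z := Function.update (⇑B) i x with hz_def
      have hz : ∀ j, z j ∈ D j := by
        intro j
        by_cases hji : j = i
        · subst hji; rw [hz_def, Function.update_self]; exact hx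
        · rw [hz_def, Function.update_of_ne hji]; exact hBD j
      have hli := htrans z hz
      have hmem : z i ∈ Submodule.span (ZMod 2) (z '' {i}ᶜ) := by
        have himg : z '' {i}ᶜ = ⇑B '' {i}ᶜ := by
          apply Set.image_congr
          intro j hj
          rw [hz_def, Function.update_of_ne hj]
        have hxr : x = ∑ j, B.repr x j • B j := (B.sum_repr x).symm
        rw [himg, hz_def, Function.update_self, hxr]
        apply Submodule.sum_mem
        intro j _
        by_cases hji : j = i
        · subst hji; rw [h0, zero_smul]; exact Submodule.zero_mem _
        · exact Submodule.smul_mem _ _ (Submodule.subset_span ⟨j, hji, rfl⟩)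
      exact hli.notMem_span_image (by simp : i ∉ ({i}ᶜ : Set (Fin (m+1)))) hmem
    have keydiff : ∀ i, ∀ x ∈ D i, ∀ y ∈ D i, B.repr (x - y) i = 0 := by
      intro i x hx y hy
      rw [map_sub, Finsupp.sub_apply, key1 i x hx, key1 i y hy, sub_self]
    -- the digraph
    set R : Fin (m+1) → Fin (m+1) → Prop :=
      fun j k => ∃ x ∈ D j, ∃ y ∈ D j, B.repr (x - y) k ≠ 0 with hR_def
    have hirr : ∀ i, ¬ R i i := by
      rintro i ⟨x, hx, y, hy, hne0⟩
      exact hne0 (keydiff i x hx y hy)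
    -- there is a source vertex
    have hsource : ∃ i₀, ∀ j, ¬ R j i₀ := by
      by_contra hcon
      push_neg at hcon
      obtain ⟨L, c, hL2, hc0, hcR, hinj, hchord⟩ := exists_min_cycle R 0 hirr hcon
      set e : Fin L → Fin (m+1) := fun t => c t.val with he_def
      have he : Function.Injective e := by
        intro a b hab
        exact Fin.ext (hinj a.val b.val a.isLt b.isLt hab)
      haveI : NeZero L := ⟨by omega⟩
      set nxt : Fin L → Fin L := fun t => t + 1 with hnxt_def
      have hnxtval : ∀ t : Fin L, (nxt t).val = (t.val + 1) % L := by
        intro t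
        rw [hnxt_def]
        simp [Fin.add_def, Nat.mod_eq_of_lt (show 1 < L by omega)]
      have hnxt : Function.Injective nxt := fun a b hab => add_right_cancel hab
      have hedge : ∀ t : Fin L, R (e t) (e (nxt t)) := by
        intro t
        rw [he_def]
        simp only []
        rw [hnxtval t]
        by_cases h : t.val + 1 = L
        · have hstep := hcR t.val (by omega)
          rw [h, ← hc0] at hstep
          rw [h, Nat.mod_self]
          exact hstep
        · rw [Nat.mod_eq_of_lt (by omega)]
          exact hcR t.val t.isLt
      choose x hx y hy hne0 using hedge
      have hcoord : ∀ s t : Fin L, B.repr (x t - y t) (e s) = if s = nxt t then 1 else 0 := by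
        intro s t
        by_cases hs : s = nxt t
        · rw [if_pos hs, hs]
          exact zmod2_eq_one_of_ne_zero _ (hne0 t)
        · rw [if_neg hs]
          by_contra hne1
          have hRts : R (e t) (e s) := ⟨x t, hx t, y t, hy t, hne1⟩
          have hval := hchord t.val s.val t.isLt s.isLt hRts
          exact hs (Fin.ext (hval.trans (hnxtval t).symm))
      exact core (show 1 ≤ L by omega) hdim D B hBD hdet1 e he nxt hnxt x y hx hy hcoord
    obtain ⟨i₀, hsrc⟩ := hsource
    set H : Submodule (ZMod 2) V := LinearMap.ker (B.coord i₀) with hH_def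
    have hmemH : ∀ v : V, v ∈ H ↔ B.repr v i₀ = 0 := by
      intro v; rw [hH_def, LinearMap.mem_ker, Basis.coord_apply]
    have hdiffH : ∀ j, ∀ x ∈ D j, ∀ y ∈ D j, B.repr (x - y) i₀ = 0 := by
      intro j x hx y hy
      by_contra hne0
      exact hsrc j ⟨x, hx, y, hy, hne0⟩
    have hsub : ∀ j, j ≠ i₀ → D j ⊆ H := by
      intro j hj x hx
      rw [SetLike.mem_coe, hmemH]
      have h1 : B.repr (x - B j) i₀ = 0 := hdiffH j x hx (B j) (hBD j)
      have h2 : B.repr (B j) i₀ = 0 := by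
        rw [B.repr_self, Finsupp.single_apply, if_neg hj]
      calc B.repr x i₀ = B.repr (x - B j) i₀ + B.repr (B j) i₀ := by
            rw [map_sub, Finsupp.sub_apply]; ring
        _ = 0 := by rw [h1, h2, add_zero]
    have hcoset : ∀ x ∈ D i₀, x - B i₀ ∈ H := by
      intro x hx; rw [hmemH]; exact hdiffH i₀ x hx (B i₀) (hBD i₀)
    have hdimH : finrank (ZMod 2) ↥H = m := by
      have hrn := LinearMap.finrank_range_add_finrank_ker (B.coord i₀)
      have hsurj : LinearMap.range (B.coord i₀) = ⊤ := by
        rw [LinearMap.range_eq_top]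
        intro cc
        refine ⟨cc • B i₀, ?_⟩
        rw [map_smul, Basis.coord_apply, B.repr_self, Finsupp.single_apply, if_pos rfl,
          smul_eq_mul, mul_one]
      rw [hsurj] at hrn
      rw [finrank_top, finrank_self, hdim] at hrn
      rw [← hH_def] at hrn
      omega
    set D' : Fin m → Set ↥H := fun k => ((↑) : ↥H → V) ⁻¹' (D (i₀.succAbove k)) with hD'_def
    have hne' : ∀ k, (D' k).Nonempty := by
      intro k
      obtain ⟨w, hw⟩ := hne (i₀.succAbove k)
      exact ⟨⟨w, hsub _ (Fin.succAbove_ne i₀ k) hw⟩, hw⟩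
    have htrans' : ∀ d' : Fin m → ↥H, (∀ k, d' k ∈ D' k) → LinearIndependent (ZMod 2) d' := by
      intro d' hd'
      set G : Fin (m+1) → V := i₀.insertNth (B i₀) (fun k => ↑(d' k)) with hG_def
      have hG : ∀ j, G j ∈ D j := by
        intro j
        by_cases hj : j = i₀
        · rw [hj, hG_def, Fin.insertNth_apply_same]; exact hBD i₀
        · obtain ⟨k, rfl⟩ := Fin.exists_succAbove_eq hj
          rw [hG_def, Fin.insertNth_apply_succAbove]
          exact hd' k
      have h2 : LinearIndependent (ZMod 2) (G ∘ i₀.succAbove) :=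
        (htrans G hG).comp _ Fin.succAbove_right_injective
      have h3 : G ∘ i₀.succAbove = (H.subtype) ∘ d' := by
        funext k
        simp only [Function.comp_apply, hG_def, Fin.insertNth_apply_succAbove,
          Submodule.coe_subtype]
      rw [h3] at h2
      exact LinearIndependent.of_comp H.subtype h2
    obtain ⟨π', ε', hprop'⟩ := IH ↥H hdimH D' hne' htrans'
    set p : Fin (m+1) → Fin (m+1) :=
      fun j => Fin.cases i₀ (fun k => i₀.succAbove (π' k)) j with hp_def
    have hp0 : p 0 = i₀ := rfl
    have hpsucc : ∀ k, p k.succ = i₀.succAbove (π' k) := fun k => rfl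
    have hpinj : Function.Injective p := by
      intro a b hab
      induction a using Fin.cases with
      | zero =>
        induction b using Fin.cases with
        | zero => rfl
        | succ kb =>
          rw [hp0, hpsucc] at hab
          exact absurd hab.symm (Fin.succAbove_ne i₀ (π' kb))
      | succ ka =>
        induction b using Fin.cases with
        | zero =>
          rw [hp0, hpsucc] at hab
          exact absurd hab (Fin.succAbove_ne i₀ (π' ka))
        | succ kb =>
          rw [hpsucc, hpsucc] at hab
          exact congrArg Fin.succ (π'.injective (Fin.succAbove_right_injective hab))
    set π : Equiv.Perm (Fin (m+1)) := Equiv.ofBijective p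
      ((Fintype.bijective_iff_injective_and_card p).mpr ⟨hpinj, rfl⟩) with hπ_def
    have hπ : ∀ j, π j = p j := fun j => rfl
    have hliε : ∀ (cc : ZMod 2), ∀ w ∈ H, cc • B i₀ + w = 0 → cc = 0 := by
      intro cc w hw hsum
      have h1 : B.repr (cc • B i₀ + w) i₀ = cc := by
        rw [map_add, Finsupp.add_apply, map_smul, Finsupp.smul_apply, B.repr_self,
          Finsupp.single_apply, if_pos rfl, (hmemH w).mp hw, smul_eq_mul, mul_one, add_zero]
      calc cc = B.repr (cc • B i₀ + w) i₀ := h1.symm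
        _ = 0 := by rw [hsum]; simp
    have hspε : ∀ z : V, ∃ cc : ZMod 2, z + cc • B i₀ ∈ H := by
      intro z
      refine ⟨B.repr z i₀, ?_⟩
      rw [hmemH, map_add, Finsupp.add_apply, map_smul, Finsupp.smul_apply, B.repr_self,
        Finsupp.single_apply, if_pos rfl, smul_eq_mul, mul_one]
      exact zmod2_add_self _
    set ε : Basis (Fin (m+1)) (ZMod 2) V := Basis.mkFinCons (B i₀) ε' hliε hspε with hε_def
    have hεcoe : ⇑ε = Fin.cons (B i₀) (((↑) : ↥H → V) ∘ ε') := Basis.coe_mkFinCons _ _ _ _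
    have hε0 : ε 0 = B i₀ := by
      show (⇑ε) 0 = B i₀
      rw [hεcoe, Fin.cons_zero]
    have hεsucc : ∀ k, ε k.succ = ↑(ε' k) := by
      intro k
      show (⇑ε) k.succ = _
      rw [hεcoe, Fin.cons_succ, Function.comp_apply]
    refine ⟨π, ε, ?_⟩
    intro i
    induction i using Fin.cases with
    | zero =>
      intro x hx
      rw [hπ, hp0] at hx
      have hx' : x - ε 0 ∈ H := by rw [hε0]; exact hcoset x hx
      have hset : ε '' {j : Fin (m+1) | 0 < j} = Set.range (H.subtype ∘ ε') := by
        ext v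
        constructor
        · rintro ⟨j, hj, rfl⟩
          obtain ⟨k, rfl⟩ := Fin.eq_succ_of_ne_zero (Fin.pos_iff_ne_zero.mp hj)
          exact ⟨k, (hεsucc k).symm⟩
        · rintro ⟨k, rfl⟩
          exact ⟨k.succ, Fin.succ_pos k, hεsucc k⟩
      rw [hset, Set.range_comp, Submodule.span_image, ε'.span_eq, Submodule.map_subtype_top]
      exact hx'
    | succ k =>
      intro x hx
      rw [hπ, hpsucc] at hx
      have hxH : x ∈ H := hsub _ (Fin.succAbove_ne i₀ (π' k)) hx
      have hmem' : (⟨x, hxH⟩ : ↥H) ∈ D' (π' k) := hx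
      have hIH := hprop' k ⟨x, hxH⟩ hmem'
      have hmap := Submodule.mem_map_of_mem (f := H.subtype) hIH
      rw [Submodule.map_span] at hmap
      have heq : H.subtype ((⟨x, hxH⟩ : ↥H) - ε' k) = x - ε k.succ := by
        rw [map_sub, hεsucc k]
        rfl
      rw [heq] at hmap
      refine Submodule.span_mono ?_ hmap
      rintro _ ⟨_, ⟨j, hj, rfl⟩, rfl⟩
      exact ⟨j.succ, Fin.succ_lt_succ_iff.mpr hj, hεsucc j⟩


/-- colored triangularization. Let `E` be an `n`-dimensional
`F₂`-vector space and `D₁,…,Dₙ ⊆ E* \ {0}` nonempty sets of nonzero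
functionals such that every transversal is a basis of `E*`. Then, after a
permutation `π` of the indices, there is a basis `ε₁,…,εₙ` of `E*` with
`D_{π(i)} ⊆ εᵢ + span(ε_{i+1},…,εₙ)` for all `i`. -/
theorem stmt6 (n : ℕ) (E : Type*) [AddCommGroup E] [Module (ZMod 2) E]
    [FiniteDimensional (ZMod 2) E] (hdim : Module.finrank (ZMod 2) E = n)
    (D : Fin n → Set (Module.Dual (ZMod 2) E))
    (hne : ∀ i, (D i).Nonempty) (h0 : ∀ i, (0 : Module.Dual (ZMod 2) E) ∉ D i)
    (htrans : ∀ d : Fin n → Module.Dual (ZMod 2) E, (∀ i, d i ∈ D i) →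
      LinearIndependent (ZMod 2) d ∧
        Submodule.span (ZMod 2) (Set.range d) = ⊤) :
    ∃ (π : Equiv.Perm (Fin n))
      (ε : Basis (Fin n) (ZMod 2) (Module.Dual (ZMod 2) E)),
      ∀ i : Fin n, ∀ x ∈ D (π i),
        x - ε i ∈ Submodule.span (ZMod 2) (ε '' {j : Fin n | i < j}) := by
  exact main n (Module.Dual (ZMod 2) E) (by rw [Subspace.dual_finrank_eq, hdim]) D hne
    (fun d hd => (htrans d hd).1)
end

section
/- Let n ≥ 1 and let m₁,...,mₙ all be odd positive integers. Suppose λ_{i,j} ∈ F₂^{2n} (for 1 ≤ i ≤ n, j ∈ Z/mᵢ) are vectors such that for every tuple j = (j₁,...,jₙ) the 2n×2n matrix with columns λ_{1,j₁}, λ_{1,j₁+1}, ..., λ_{n,jₙ}, λ_{n,jₙ+1} has determinant 1 (indices cyclic mod mᵢ). Then there is no linear functional φ : F₂^{2n} → F₂ with φ(λ_{i,j}) = 1 for all i, j. -/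
/-!
Fix `e` with `φ e = 1` and write every `λ_{i,j} = e + w_{i,j}` with `φ w_{i,j} = 0`. By
multilinearity each vertex determinant is `det W + Σ_c det(W with column c replaced by e)`,
where `det W = 0` because all columns of `W` lie in the hyperplane `ker φ`. Summed over all
vertices the terms cancel in pairs: replacing the first `i`-column by `e` at the vertex `j`
and the second one at `j + δ_i` gives the same columns up to a transposition. Hence the sum of
all vertex determinants vanishes, whereas it equals the number `m₁ ⋯ mₙ` of vertices, which is
odd.
-/

open Function

namespace AlternatingMap

variable {R M N ι : Type*} [CommSemiring R] [AddCommMonoid M] [Module R M]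
  [AddCommMonoid N] [Module R N] [Fintype ι] [DecidableEq ι]

theorem map_const_add (f : M [⋀^ι]→ₗ[R] N) (e : M) (w : ι → M) :
    f (fun c => e + w c) = f w + ∑ c, f (update w c e) := by
  have hrepeated : ∀ s : Finset ι,
      s ∉ insert ∅ (Finset.univ.map ⟨_, Finset.singleton_injective⟩) →
      f (s.piecewise (fun _ => e) w) = 0 := by
    intro s hs
    simp only [Finset.mem_insert, Finset.mem_map, Finset.mem_univ, true_and,
      Embedding.coeFn_mk, not_or, not_exists] at hs
    obtain ⟨a, ha, b, hb, hab⟩ :=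
      ((Finset.nonempty_iff_ne_empty.mpr hs.1).exists_eq_singleton_or_nontrivial.resolve_left
        fun ⟨a, ha⟩ => hs.2 a ha.symm)
    exact f.map_eq_zero_of_eq _
      (by rw [Finset.piecewise_eq_of_mem _ _ _ ha, Finset.piecewise_eq_of_mem _ _ _ hb]) hab
  rw [show (fun c => e + w c) = (fun _ => e) + w from rfl, f.map_add_univ,
    ← Finset.sum_subset (Finset.subset_univ _) (fun s _ hs => hrepeated s hs),
    Finset.sum_insert (by simp), Finset.sum_map]
  simp [Finset.piecewise_singleton]

end AlternatingMap

variable {ι M N R : Type*} [DecidableEq ι] {m : ι → ℕ}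

/-- The columns `λ_{i,jᵢ}, λ_{i,jᵢ+1}` of the vertex matrix at `j`, the column `(i, ε)` holding
`λ_{i,jᵢ+ε}`. -/
def vertexFamily (v : (i : ι) → ZMod (m i) → M) (j : (i : ι) → ZMod (m i)) : ι × Fin 2 → M :=
  fun c => v c.1 (j c.1 + (c.2.val : ZMod (m c.1)))

theorem vertexFamily_add_single_update_one (v : (i : ι) → ZMod (m i) → M)
    (j : (i : ι) → ZMod (m i)) (i : ι) (e : M) :
    update (vertexFamily v (j + Pi.single i 1)) (i, 1) e =
      update (vertexFamily v j) (i, 0) e ∘ Equiv.swap (i, 0) (i, 1) := by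
  ext ⟨i', ε⟩
  by_cases hi : i' = i
  · subst hi
    fin_cases ε <;> simp [vertexFamily]
  · have h0 : ((i', ε) : ι × Fin 2) ≠ (i, 0) := by simp [hi]
    have h1 : ((i', ε) : ι × Fin 2) ≠ (i, 1) := by simp [hi]
    simp [vertexFamily, Equiv.swap_apply_of_ne_of_ne h0 h1, h0, h1, hi]

variable [Fintype ι] [CommSemiring R] [AddCommMonoid M] [Module R M] [AddCommMonoid N] [Module R N]

theorem sum_sum_map_update_vertexFamily [∀ i, NeZero (m i)] (f : M [⋀^(ι × Fin 2)]→ₗ[R] N)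
    (v : (i : ι) → ZMod (m i) → M) (e : M) :
    ∑ j, ∑ c, f (update (vertexFamily v j) c e) = 0 := by
  rw [Finset.sum_comm, Fintype.sum_prod_type]
  refine Finset.sum_eq_zero fun i _ => ?_
  rw [Fin.sum_univ_two, ← Equiv.sum_comp (Equiv.addRight (Pi.single i 1))
      (fun j => f (update (vertexFamily v j) (i, 1) e)),
    ← Finset.sum_add_distrib]
  refine Finset.sum_eq_zero fun j _ => ?_
  rw [Equiv.coe_addRight, vertexFamily_add_single_update_one, f.map_add_swap _ (by simp)]

theorem Matrix.det_of_eq_zero_of_map_eq_zero {K κ : Type*} [Field K] [Fintype κ] [DecidableEq κ]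
    {φ : (κ → K) →ₗ[K] K} (hφ : φ ≠ 0) {v : κ → κ → K} (hv : ∀ c, φ (v c) = 0) :
    (Matrix.of v).det = 0 := by
  by_contra hdet
  have hspan := (Matrix.linearIndependent_rows_of_det_ne_zero hdet).span_eq_top_of_card_eq_finrank'
    (Module.finrank_fintype_fun_eq_card K).symm
  exact hφ (LinearMap.ext_on_range hspan hv)

theorem sum_det_vertexFamily_eq_zero {K : Type*} [Field K] [∀ i, NeZero (m i)]
    {φ : (ι × Fin 2 → K) →ₗ[K] K} {e : ι × Fin 2 → K} (he : φ e = 1)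
    {lam : (i : ι) → ZMod (m i) → ι × Fin 2 → K} (hlam : ∀ i k, φ (lam i k) = 1) :
    ∑ j, (Matrix.of (vertexFamily lam j)).det = 0 := by
  set w : (i : ι) → ZMod (m i) → ι × Fin 2 → K := fun i k => lam i k - e
  have hw : ∀ j c, φ (vertexFamily w j c) = 0 := fun j c => by simp [w, vertexFamily, hlam, he]
  have hφ : φ ≠ 0 := fun h => by simp [h] at he
  calc ∑ j, (Matrix.of (vertexFamily lam j)).det
      = ∑ j, Matrix.detRowAlternating (fun c => e + vertexFamily w j c) := by
        simp only [w, vertexFamily, add_sub_cancel]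
        rfl
    _ = ∑ j, ∑ c, Matrix.detRowAlternating (update (vertexFamily w j) c e) := by
        refine Finset.sum_congr rfl fun j _ => ?_
        rw [AlternatingMap.map_const_add, show Matrix.detRowAlternating (vertexFamily w j) = 0 from
          Matrix.det_of_eq_zero_of_map_eq_zero hφ (hw j), zero_add]
    _ = 0 := sum_sum_map_update_vertexFamily _ w e

theorem stmt8_general (n : ℕ) (hn : 1 ≤ n) (m : Fin n → ℕ)
    (hodd : ∀ i, Odd (m i))
    (lam : (i : Fin n) → ZMod (m i) → ((Fin n × Fin 2) → ZMod 2))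
    (hdet : ∀ j : (i : Fin n) → ZMod (m i),
      (Matrix.of fun (r c : Fin n × Fin 2) =>
        lam c.1 (j c.1 + (c.2.val : ZMod (m c.1))) r).det = 1) :
    ¬ ∃ φ : ((Fin n × Fin 2) → ZMod 2) →ₗ[ZMod 2] ZMod 2,
        ∀ (i : Fin n) (j : ZMod (m i)), φ (lam i j) = 1 := by
  rintro ⟨φ, hφ⟩
  have : ∀ i, NeZero (m i) := fun i => ⟨(hodd i).pos.ne'⟩
  have hvertex : ∀ j, (Matrix.of (vertexFamily lam j)).det = 1 := fun j => by
    rw [← Matrix.det_transpose]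
    exact hdet j
  have hcard : (Fintype.card ((i : Fin n) → ZMod (m i)) : ZMod 2) = 1 := by
    simp [Fintype.card_pi, ZMod.card, ZMod.natCast_eq_one_iff_odd.mpr (hodd _)]
  have hsum := sum_det_vertexFamily_eq_zero (hφ ⟨0, hn⟩ 0) hφ
  simp only [hvertex, Finset.sum_const, Finset.card_univ, nsmul_eq_mul, mul_one, hcard] at hsum
  exact one_ne_zero hsum

/-- non-orientability over products of odd polygons.
Vectors `λ_{i,j} ∈ F₂^{2n}` (coordinates indexed by `Fin n × Fin 2`),
with `j ∈ Z/mᵢ` cyclic and all `mᵢ` odd positive, satisfying the vertex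
nonsingularity condition (every `2n × 2n` vertex matrix with columns
`λ_{1,j₁}, λ_{1,j₁+1}, …, λ_{n,jₙ}, λ_{n,jₙ+1}` has determinant `1`).
Then no linear functional `φ` takes the value `1` on all the `λ_{i,j}`. -/
theorem stmt8 (n : ℕ) (hn : 1 ≤ n) (m : Fin n → ℕ)
    (hpos : ∀ i, 0 < m i) (hodd : ∀ i, Odd (m i))
    (lam : (i : Fin n) → ZMod (m i) → ((Fin n × Fin 2) → ZMod 2))
    (hdet : ∀ j : (i : Fin n) → ZMod (m i),
      (Matrix.of fun (r c : Fin n × Fin 2) =>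
        lam c.1 (j c.1 + (c.2.val : ZMod (m c.1))) r).det = 1) :
    ¬ ∃ φ : ((Fin n × Fin 2) → ZMod 2) →ₗ[ZMod 2] ZMod 2,
        ∀ (i : Fin n) (j : ZMod (m i)), φ (lam i j) = 1 :=
  stmt8_general n hn m hodd lam hdet
end

section
/- Let n ≥ 2 and suppose λ_{i,j} ∈ F₂^{2n} (1 ≤ i ≤ n, j ∈ Z/mᵢ) satisfy the vertex nonsingularity condition: for every tuple (j₁,...,jₙ), the matrix with columns λ_{1,j₁}, λ_{1,j₁+1}, ..., λ_{n,jₙ}, λ_{n,jₙ+1} is invertible over F₂. Fix an index i and suppose there is a linear functional φ : F₂^{2n} → F₂ with φ(λ_{i,j}) = 1 for all j ∈ Z/mᵢ and φ(λ_{k,l}) equal to a prescribed value χ_i(k,l) which is 0 for all k ≠ i. Then mᵢ is even. -/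
/-!
The columns at the vertex with all coordinates `0` form a basis `b`; let `W` be the span of
those outside factor `i`. As `φ` vanishes on `W` and is `1` on both columns of factor `i`,
`φ = b*₍ᵢ,₀₎ + b*₍ᵢ,₁₎`. Nonsingularity at the vertex whose `i`-th coordinate is `a` (which has
the same columns outside factor `i`) gives `λ_{i,a} + λ_{i,a+1} ∉ W`; since `φ` kills this sum,
its `(i,0)`-coordinate is nonzero. Hence the `(i,0)`-coordinate of `λ_{i,a}` alternates in `F₂`
as `a` runs around `ℤ/mᵢ`, which forces `mᵢ` to be even.
-/

open Module

theorem even_of_forall_apply_add_one_ne {m : ℕ} (f : ZMod m → ZMod 2)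
    (hf : ∀ j, f (j + 1) ≠ f j) : Even m := by
  have step : ∀ j, f (j + 1) = f j + 1 := by
    have h : ∀ x y : ZMod 2, x ≠ y → x = y + 1 := by decide
    exact fun j => h _ _ (hf j)
  have walk : ∀ t : ℕ, f t = f 0 + t := by
    intro t
    induction t with
    | zero => simp
    | succ t ih => rw [Nat.cast_succ, step, ih, Nat.cast_succ, add_assoc]
  have := walk m
  rw [ZMod.natCast_self, left_eq_add, ZMod.natCast_eq_zero_iff] at this
  exact even_iff_two_dvd.2 this

theorem even_of_adjacent_add_notMem_span {ι V : Type*} [AddCommGroup V] [Module (ZMod 2) V]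
    (b : Basis ι (ZMod 2) V) {p q : ι} (φ : V →ₗ[ZMod 2] ZMod 2)
    (hφ : φ = b.coord p + b.coord q) {m : ℕ} (x : ZMod m → V) (hx : ∀ j, φ (x j) = 1)
    (hadj : ∀ j, x j + x (j + 1) ∉ Submodule.span (ZMod 2) (b '' {p, q}ᶜ)) : Even m := by
  refine even_of_forall_apply_add_one_ne (fun j => b.coord p (x j)) fun j hj => hadj j ?_
  have hp : b.coord p (x j + x (j + 1)) = 0 := by
    rw [map_add, hj, CharTwo.add_self_eq_zero]
  have hφd : φ (x j + x (j + 1)) = 0 := by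
    rw [map_add, hx, hx, CharTwo.add_self_eq_zero]
  have hq : b.coord q (x j + x (j + 1)) = 0 := by
    rwa [hφ, LinearMap.add_apply, hp, zero_add] at hφd
  rw [b.mem_span_image]
  intro k hk
  simp only [Set.mem_compl_iff, Set.mem_insert_iff, Set.mem_singleton_iff]
  rintro (rfl | rfl)
  exacts [Finsupp.mem_support_iff.1 hk hp, Finsupp.mem_support_iff.1 hk hq]

theorem Module.Basis.add_notMem_span_image {ι R M : Type*} [Semiring R] [Nontrivial R]
    [AddCommMonoid M] [Module R M] (b : Basis ι R M) {p q : ι} {s : Set ι} (hp : p ∉ s)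
    (hpq : p ≠ q) : b p + b q ∉ Submodule.span R (b '' s) := by
  classical
  rw [b.mem_span_image]
  intro h
  exact hp (h (by simp [hpq]))

theorem exists_basis_coe_eq_of_isUnit {ι K : Type*} [Fintype ι] [DecidableEq ι] [Field K]
    {v : ι → ι → K} (hv : IsUnit (Matrix.of fun r c => v c r)) :
    ∃ b : Basis ι K (ι → K), ⇑b = v := by
  classical
  exact ⟨basisOfPiSpaceOfLinearIndependent (Matrix.linearIndependent_cols_iff_isUnit.2 hv),
    coe_basisOfPiSpaceOfLinearIndependent _⟩

section Polygons

variable {n : ℕ} {m : Fin n → ℕ} (lam : (k : Fin n) → ZMod (m k) → (Fin n × Fin 2 → ZMod 2))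

def vertexColumns (j : (k : Fin n) → ZMod (m k)) (c : Fin n × Fin 2) : Fin n × Fin 2 → ZMod 2 :=
  lam c.1 (j c.1 + c.2.val)

theorem vertexColumns_zero (c : Fin n × Fin 2) : vertexColumns lam 0 c = lam c.1 c.2.val := by
  simp [vertexColumns]

theorem vertexColumns_single_self (i : Fin n) (a : ZMod (m i)) (t : Fin 2) :
    vertexColumns lam (Pi.single i a) (i, t) = lam i (a + t.val) := by
  simp [vertexColumns]

theorem vertexColumns_single_of_fst_ne {i : Fin n} (a : ZMod (m i)) {c : Fin n × Fin 2}
    (hc : c.1 ≠ i) : vertexColumns lam (Pi.single i a) c = vertexColumns lam 0 c := by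
  simp [vertexColumns, Pi.single_eq_of_ne hc]

theorem eq_coord_add_coord_of_coe_eq_vertexColumns_zero {b : Basis _ (ZMod 2) _}
    (hb : ⇑b = vertexColumns lam 0) {i : Fin n} (φ : (Fin n × Fin 2 → ZMod 2) →ₗ[ZMod 2] ZMod 2)
    (hφi : ∀ j, φ (lam i j) = 1) (hφk : ∀ k, k ≠ i → ∀ l, φ (lam k l) = 0) :
    φ = b.coord (i, 0) + b.coord (i, 1) := by
  refine b.ext fun ⟨k, t⟩ => ?_
  rw [LinearMap.add_apply, Basis.coord_apply, Basis.coord_apply, Basis.repr_self, hb,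
    vertexColumns_zero]
  by_cases hk : k = i
  · subst hk
    rw [hφi]
    fin_cases t <;> simp
  · rw [hφk k hk]
    simp [hk]

theorem add_notMem_span_vertexColumns_zero {b : Basis _ (ZMod 2) _}
    (hb : ⇑b = vertexColumns lam 0) {i : Fin n} (a : ZMod (m i))
    (hdet : IsUnit (Matrix.of fun r c => vertexColumns lam (Pi.single i a) c r)) :
    lam i a + lam i (a + 1) ∉ Submodule.span (ZMod 2) (b '' {(i, 0), (i, 1)}ᶜ) := by
  obtain ⟨b', hb'⟩ := exists_basis_coe_eq_of_isUnit hdet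
  have hW : b '' {(i, 0), (i, 1)}ᶜ = b' '' {(i, 0), (i, 1)}ᶜ := by
    refine Set.image_congr fun ⟨k, t⟩ hkt => ?_
    have hk : k ≠ i := by
      rintro rfl
      fin_cases t <;> simp at hkt
    rw [hb, hb', vertexColumns_single_of_fst_ne lam a (c := (k, t)) hk]
  have hb'i : ∀ t : Fin 2, b' (i, t) = lam i (a + t.val) := fun t => by
    rw [hb', vertexColumns_single_self]
  rw [hW, show lam i a + lam i (a + 1) = b' (i, 0) + b' (i, 1) by simp [hb'i]]
  exact b'.add_notMem_span_image (by simp) (by simp)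

end Polygons

theorem stmt11_general (n : ℕ) (m : Fin n → ℕ)
    (lam : (i : Fin n) → ZMod (m i) → ((Fin n × Fin 2) → ZMod 2))
    (hdet : ∀ j : (i : Fin n) → ZMod (m i),
      IsUnit (Matrix.of fun (r c : Fin n × Fin 2) =>
        lam c.1 (j c.1 + (c.2.val : ZMod (m c.1))) r))
    (i : Fin n)
    (φ : ((Fin n × Fin 2) → ZMod 2) →ₗ[ZMod 2] ZMod 2)
    (hφi : ∀ j : ZMod (m i), φ (lam i j) = 1)
    (hφk : ∀ k : Fin n, k ≠ i → ∀ l : ZMod (m k), φ (lam k l) = 0) :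
    Even (m i) := by
  obtain ⟨b, hb⟩ : ∃ b : Basis _ (ZMod 2) _, ⇑b = vertexColumns lam 0 :=
    exists_basis_coe_eq_of_isUnit (hdet 0)
  exact even_of_adjacent_add_notMem_span b φ
    (eq_coord_add_coord_of_coe_eq_vertexColumns_zero lam hb φ hφi hφk) (lam i) hφi
    fun a => add_notMem_span_vertexColumns_zero lam hb a (hdet _)

/-- Under the vertex nonsingularity condition for vectors
`λ_{i,j} ∈ F₂^{2n}` (coordinates indexed by `Fin n × Fin 2`, `j ∈ Z/mᵢ`
cyclic), if some linear functional `φ` satisfies `φ(λ_{i,j}) = 1` for all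
`j` in a fixed factor `i`, and `φ(λ_{k,l}) = 0` for all `k ≠ i`, then `mᵢ`
is even. (This says: if the factor weight `χᵢ` lies in the row space of a
characteristic matrix over a product of polygons, then the `i`-th polygon has
an even number of sides.) -/
theorem stmt11 (n : ℕ) (hn : 2 ≤ n) (m : Fin n → ℕ)
    (lam : (i : Fin n) → ZMod (m i) → ((Fin n × Fin 2) → ZMod 2))
    (hdet : ∀ j : (i : Fin n) → ZMod (m i),
      IsUnit (Matrix.of fun (r c : Fin n × Fin 2) =>
        lam c.1 (j c.1 + (c.2.val : ZMod (m c.1))) r))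
    (i : Fin n)
    (φ : ((Fin n × Fin 2) → ZMod 2) →ₗ[ZMod 2] ZMod 2)
    (hφi : ∀ j : ZMod (m i), φ (lam i j) = 1)
    (hφk : ∀ k : Fin n, k ≠ i → ∀ l : ZMod (m k), φ (lam k l) = 0) :
    Even (m i) :=
  stmt11_general n m lam hdet i φ hφi hφk
end

section
/- Let E be an n-dimensional F₂-vector space arising as E = row(λ)/C as above, and for each factor i and each cyclically adjacent facet pair (F_{i,k}, F_{i,k+1}) define d_{i,k} ∈ E* by d_{i,k}([w]) = w(F_{i,k}) + w(F_{i,k+1}). Then: (a) d_{i,k} is well-defined (independent of the representative w modulo C); and (b) for every choice of one adjacent pair per factor, the resulting n functionals d_{1,k₁},...,d_{n,kₙ} form a basis of E*. -/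
noncomputable section

/-- Facets of the product of polygons `P_{m₁} × ⋯ × P_{mₙ}`. -/
abbrev PFacets (n : ℕ) (m : Fin n → ℕ) := (i : Fin n) × ZMod (m i)

/-- The row space of `λ`: the span of its rows inside `F₂^{facets}`. -/
def rowSpace {n : ℕ} {m : Fin n → ℕ}
    (lam : (PFacets n m → ZMod 2) →ₗ[ZMod 2] (Fin (2 * n) → ZMod 2)) :
    Submodule (ZMod 2) (PFacets n m → ZMod 2) :=
  Submodule.span (ZMod 2)
    (Set.range fun r : Fin (2 * n) => fun p : PFacets n m =>
      lam (Pi.single p 1) r)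

/-- The factor weight `χᵢ`. -/
def factorWeight {n : ℕ} (m : Fin n → ℕ) (i : Fin n) :
    PFacets n m → ZMod 2 :=
  fun p => if p.1 = i then 1 else 0

/-- `C = span(χ₁,…,χₙ)`. -/
def weightSpan {n : ℕ} (m : Fin n → ℕ) :
    Submodule (ZMod 2) (PFacets n m → ZMod 2) :=
  Submodule.span (ZMod 2) (Set.range (factorWeight m))

/-- The vertex nonsingularity (characteristic) condition. -/
def IsCharacteristic {n : ℕ} {m : Fin n → ℕ}
    (lam : (PFacets n m → ZMod 2) →ₗ[ZMod 2] (Fin (2 * n) → ZMod 2)) : Prop :=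
  ∀ j : (i : Fin n) → ZMod (m i),
    LinearIndependent (ZMod 2) (fun c : Fin n × Fin 2 =>
      lam (Pi.single ⟨c.1, j c.1 + (c.2.val : ZMod (m c.1))⟩ 1))

/-!
Elements of `C` are constant on each block of facets, so the adjacent sums `d_{i,k}` do not see
them. At the vertex `k` the characteristic condition says the `2n` columns of `λ` at the facets
through `k` are independent; hence the row space (spanned by `2n` rows) restricts isomorphically
onto functions on those facets. Prescribing the restriction gives surjectivity of the `d`'s, and a
row-space element with vanishing `d`'s agrees at `k` with `∑ᵢ w(F_{i,kᵢ}) χᵢ ∈ C ⊆ row(λ)`, so it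
equals it.
-/

open Module

theorem Matrix.span_row_eq_top_of_linearIndependent_col {K ρ ι : Type*} [Field K]
    [Fintype ρ] [Fintype ι] {M : Matrix ρ ι K} (h : LinearIndependent K M.col) :
    Submodule.span K (Set.range M.row) = ⊤ := by
  apply Submodule.eq_top_of_finrank_eq
  rw [← M.rank_eq_finrank_span_row, ← M.rank_transpose, h.rank_matrix,
    finrank_fintype_fun_eq_card]

theorem LinearMap.funLeft_domRestrict_span_bijective {K ρ α ι : Type*} [Field K]
    [Fintype ρ] [Fintype ι] (R : ρ → α → K) (p : ι → α)
    (hind : LinearIndependent K fun c r => R r (p c))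
    (hcard : Fintype.card ρ ≤ Fintype.card ι) :
    Function.Bijective
      ((LinearMap.funLeft K K p).domRestrict (Submodule.span K (Set.range R))) := by
  have hsurj : Function.Surjective
      ((LinearMap.funLeft K K p).domRestrict (Submodule.span K (Set.range R))) := by
    rw [← LinearMap.range_eq_top, LinearMap.range_domRestrict, Submodule.map_span,
      ← Set.range_comp]
    exact Matrix.span_row_eq_top_of_linearIndependent_col (M := fun r c => R r (p c)) hind
  have : FiniteDimensional K (Submodule.span K (Set.range R)) :=
    FiniteDimensional.span_of_finite K (Set.finite_range R)
  refine ⟨?_, hsurj⟩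
  rw [← LinearMap.ker_eq_bot, ← Submodule.finrank_eq_zero]
  have hrank := LinearMap.finrank_range_add_finrank_ker
    ((LinearMap.funLeft K K p).domRestrict (Submodule.span K (Set.range R)))
  rw [LinearMap.range_eq_top.mpr hsurj, finrank_top, finrank_fintype_fun_eq_card] at hrank
  have hspan : Set.finrank K (Set.range R) ≤ Fintype.card ρ := finrank_range_le_card R
  rw [Set.finrank] at hspan
  omega

section Facets

variable {n : ℕ} {m : Fin n → ℕ}

theorem apply_eq_of_mem_weightSpan {c : PFacets n m → ZMod 2} (hc : c ∈ weightSpan m)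
    (i : Fin n) (a b : ZMod (m i)) : c ⟨i, a⟩ = c ⟨i, b⟩ := by
  induction hc using Submodule.span_induction with
  | mem v hv =>
    obtain ⟨j, rfl⟩ := hv
    simp [factorWeight]
  | zero => rfl
  | add u v _ _ hu hv => simp only [Pi.add_apply, hu, hv]
  | smul t v _ hv => simp only [Pi.smul_apply, hv]

theorem sum_smul_factorWeight_apply (a : Fin n → ZMod 2) (i : Fin n) (b : ZMod (m i)) :
    (∑ j, a j • factorWeight m j) ⟨i, b⟩ = a i := by
  simp [factorWeight, Finset.sum_apply]

theorem weightSpan_le_rowSpace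
    {lam : (PFacets n m → ZMod 2) →ₗ[ZMod 2] (Fin (2 * n) → ZMod 2)}
    (hcompat : ∀ i, factorWeight m i ∈ rowSpace lam) : weightSpan m ≤ rowSpace lam := by
  rw [weightSpan, Submodule.span_le]
  rintro _ ⟨i, rfl⟩
  exact hcompat i

def vertexFacet (k : (i : Fin n) → ZMod (m i)) (c : Fin n × Fin 2) : PFacets n m :=
  ⟨c.1, k c.1 + (c.2.val : ZMod (m c.1))⟩

@[simp]
theorem vertexFacet_zero (k : (i : Fin n) → ZMod (m i)) (i : Fin n) :
    vertexFacet k (i, 0) = ⟨i, k i⟩ := by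
  simp [vertexFacet]

@[simp]
theorem vertexFacet_one (k : (i : Fin n) → ZMod (m i)) (i : Fin n) :
    vertexFacet k (i, 1) = ⟨i, k i + 1⟩ := by
  simp [vertexFacet]

variable {lam : (PFacets n m → ZMod 2) →ₗ[ZMod 2] (Fin (2 * n) → ZMod 2)}

theorem IsCharacteristic.restrict_vertexFacet_bijective (hchar : IsCharacteristic lam)
    (k : (i : Fin n) → ZMod (m i)) :
    Function.Bijective
      ((LinearMap.funLeft (ZMod 2) (ZMod 2) (vertexFacet k)).domRestrict (rowSpace lam)) :=
  LinearMap.funLeft_domRestrict_span_bijective _ _ (hchar k) (by simp [mul_comm])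

theorem IsCharacteristic.exists_mem_rowSpace_restrict_eq (hchar : IsCharacteristic lam)
    (k : (i : Fin n) → ZMod (m i)) (t : Fin n × Fin 2 → ZMod 2) :
    ∃ w ∈ rowSpace lam, ∀ c, w (vertexFacet k c) = t c := by
  obtain ⟨⟨w, hw⟩, hwt⟩ := (hchar.restrict_vertexFacet_bijective k).2 t
  exact ⟨w, hw, fun c => congrFun hwt c⟩

theorem IsCharacteristic.eq_zero_of_restrict_eq_zero (hchar : IsCharacteristic lam)
    (k : (i : Fin n) → ZMod (m i)) {w : PFacets n m → ZMod 2} (hw : w ∈ rowSpace lam)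
    (hw0 : ∀ c, w (vertexFacet k c) = 0) : w = 0 := by
  have := (hchar.restrict_vertexFacet_bijective k).1
    (a₁ := ⟨w, hw⟩) (a₂ := 0) (funext fun c => by simp [hw0 c])
  exact congrArg Subtype.val this

theorem IsCharacteristic.mem_weightSpan_of_adjacent_sum_eq_zero (hchar : IsCharacteristic lam)
    (hcompat : ∀ i, factorWeight m i ∈ rowSpace lam) (k : (i : Fin n) → ZMod (m i))
    {w : PFacets n m → ZMod 2} (hw : w ∈ rowSpace lam)
    (hd : ∀ i, w ⟨i, k i⟩ + w ⟨i, k i + 1⟩ = 0) : w ∈ weightSpan m := by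
  set c : PFacets n m → ZMod 2 := ∑ i, w ⟨i, k i⟩ • factorWeight m i
  have hc : c ∈ weightSpan m :=
    Submodule.sum_mem _ fun i _ => Submodule.smul_mem _ _ (Submodule.subset_span ⟨i, rfl⟩)
  have hwc : w - c = 0 := by
    refine hchar.eq_zero_of_restrict_eq_zero k
      (Submodule.sub_mem _ hw (weightSpan_le_rowSpace hcompat hc)) ?_
    rintro ⟨i, e⟩
    fin_cases e
    · simp only [Pi.sub_apply, Fin.zero_eta, vertexFacet_zero, c, sum_smul_factorWeight_apply,
        sub_self]
    · simp only [Pi.sub_apply, Fin.mk_one, vertexFacet_one, c, sum_smul_factorWeight_apply,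
        CharTwo.add_eq_zero.mp (hd i), sub_self]
  rwa [sub_eq_zero.mp hwc]

end Facets

theorem stmt18_general (n : ℕ) (m : Fin n → ℕ)
    (lam : (PFacets n m → ZMod 2) →ₗ[ZMod 2] (Fin (2 * n) → ZMod 2))
    (hchar : IsCharacteristic lam)
    (hcompat : ∀ i, factorWeight m i ∈ rowSpace lam) :
    (∀ (i : Fin n) (k : ZMod (m i)) (w : PFacets n m → ZMod 2),
      ∀ c ∈ weightSpan m,
        (w + c) ⟨i, k⟩ + (w + c) ⟨i, k + 1⟩ = w ⟨i, k⟩ + w ⟨i, k + 1⟩) ∧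
    (∀ k : (i : Fin n) → ZMod (m i),
      Function.Surjective (fun w : rowSpace lam => fun i : Fin n =>
        (w : PFacets n m → ZMod 2) ⟨i, k i⟩ +
          (w : PFacets n m → ZMod 2) ⟨i, k i + 1⟩) ∧
      ∀ w ∈ rowSpace lam,
        ((∀ i : Fin n, w ⟨i, k i⟩ + w ⟨i, k i + 1⟩ = 0) ↔
          w ∈ weightSpan m)) := by
  refine ⟨fun i k w c hc => ?_, fun k => ⟨fun t => ?_, fun w hw => ?_⟩⟩
  · rw [Pi.add_apply, Pi.add_apply, apply_eq_of_mem_weightSpan hc i k (k + 1),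
      add_add_add_comm, CharTwo.add_self_eq_zero, add_zero]
  · obtain ⟨w, hw, hwt⟩ :=
      hchar.exists_mem_rowSpace_restrict_eq k fun c => if c.2 = 1 then t c.1 else 0
    refine ⟨⟨w, hw⟩, funext fun i => ?_⟩
    have h0 := hwt (i, 0)
    have h1 := hwt (i, 1)
    simp only [vertexFacet_zero, vertexFacet_one] at h0 h1
    simp [h0, h1]
  · refine ⟨hchar.mem_weightSpan_of_adjacent_sum_eq_zero hcompat k hw, fun hwc i => ?_⟩
    rw [apply_eq_of_mem_weightSpan hwc i (k i) (k i + 1)]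
    exact CharTwo.add_self_eq_zero _

/-- In the factor-compatible setting with
`E = row(λ)/C` of dimension `n`, the functionals
`d_{i,k}([w]) = w(F_{i,k}) + w(F_{i,k+1})` are:
(a) well defined — adding an element of `C = span(χ₁,…,χₙ)` to `w` does not
change the value `w(F_{i,k}) + w(F_{i,k+1})`; and
(b) for each choice of one adjacent pair `kᵢ` per factor, the functionals
`d_{1,k₁},…,d_{n,kₙ}` form a basis of `E*`; concretely, the linear map
`row(λ) → F₂^n`, `w ↦ (w(F_{i,kᵢ}) + w(F_{i,kᵢ+1}))ᵢ`, is surjective and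
its kernel is exactly `C`. -/
theorem stmt18 (n : ℕ) (m : Fin n → ℕ) [∀ i, NeZero (m i)]
    (hm : ∀ i, 3 ≤ m i)
    (lam : (PFacets n m → ZMod 2) →ₗ[ZMod 2] (Fin (2 * n) → ZMod 2))
    (hchar : IsCharacteristic lam)
    (hcompat : ∀ i, factorWeight m i ∈ rowSpace lam) :
    (∀ (i : Fin n) (k : ZMod (m i)) (w : PFacets n m → ZMod 2),
      ∀ c ∈ weightSpan m,
        (w + c) ⟨i, k⟩ + (w + c) ⟨i, k + 1⟩ = w ⟨i, k⟩ + w ⟨i, k + 1⟩) ∧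
    (∀ k : (i : Fin n) → ZMod (m i),
      Function.Surjective (fun w : rowSpace lam => fun i : Fin n =>
        (w : PFacets n m → ZMod 2) ⟨i, k i⟩ +
          (w : PFacets n m → ZMod 2) ⟨i, k i + 1⟩) ∧
      ∀ w ∈ rowSpace lam,
        ((∀ i : Fin n, w ⟨i, k i⟩ + w ⟨i, k i + 1⟩ = 0) ↔
          w ∈ weightSpan m)) :=
  stmt18_general n m lam hchar hcompat
end
end
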